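/- Let P be a symmetric transition matrix on a nonempty finite state space Ω (P x y = P y x for all x, y) satisfying the lumpability condition with respect to an equivalence relation ∼; let π be the uniform distribution on Ω and π̄ its pushforward on the quotient Ω̄ (so π̄(C) = |C| / |Ω|). For x ∈ Ω let 𝟙̄_x be the distribution that is uniform on the class [x] and zero elsewhere. Then for every x ∈ Ω and every t ∈ ℕ, d_V(𝟙̄_x P^t, π) = d_V(𝟙_{[x]} P̄^t, π̄). -/

import Mathlib

open Finset

noncomputable section

variable {Ω : Type*}

/-- The sum of `μ` over the equivalence class `C` of the setoid `s`. -/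
def Pushforward (s : Setoid Ω) [Fintype Ω] [DecidableEq (Quotient s)]
    (μ : Ω → ℝ) (C : Quotient s) : ℝ :=
  ∑ z ∈ Finset.univ.filter (fun z => Quotient.mk s z = C), μ z

/-- The lumpability condition. -/
def IsLumpable (s : Setoid Ω) [Fintype Ω] [DecidableEq (Quotient s)]
    (P : Ω → Ω → ℝ) : Prop :=
  ∀ x x' : Ω, s.r x x' → ∀ C : Quotient s,
    Pushforward s (P x) C = Pushforward s (P x') C

/-- The projected (lumped) transition matrix on the quotient. -/
def Proj (s : Setoid Ω) [Fintype Ω] [DecidableEq (Quotient s)]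
    (P : Ω → Ω → ℝ) (C D : Quotient s) : ℝ :=
  Pushforward s (P C.out) D

/-- One step of the Markov chain: `(μP)(y) = ∑ x, μ x * P x y`. -/
def Step {S : Type*} [Fintype S] (P : S → S → ℝ) (μ : S → ℝ) : S → ℝ :=
  fun y => ∑ x, μ x * P x y

/-- The one-point distribution at `x`. -/
def onePoint {S : Type*} [DecidableEq S] (x : S) : S → ℝ :=
  fun y => if y = x then 1 else 0

/-- The size of the equivalence class of `x`. -/
def classCard (s : Setoid Ω) [Fintype Ω] [DecidableEq (Quotient s)] (x : Ω) : ℕ :=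
  (Finset.univ.filter (fun z => Quotient.mk s z = Quotient.mk s x)).card

/-- The distribution that is uniform on the class of `x` and zero elsewhere. -/
def classUniform (s : Setoid Ω) [Fintype Ω] [DecidableEq (Quotient s)] (x : Ω) : Ω → ℝ :=
  fun y =>
    if Quotient.mk s y = Quotient.mk s x then 1 / (classCard s x : ℝ) else 0

/-- The uniform distribution on a finite set. -/
def uniformDist (S : Type*) [Fintype S] : S → ℝ :=
  fun _ => 1 / (Fintype.card S : ℝ)

/-- Total variation distance between two distributions on a finite set. -/
def dV {S : Type*} [Fintype S] (μ ν : S → ℝ) : ℝ :=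
  (1 / 2) * ∑ x, |μ x - ν x|

/-!
Lumpability says that `Pushforward s (P x)` depends only on the class of `x`, which makes
`Pushforward s` intertwine one step of `P` with one step of the projected matrix `Proj s P`.
Symmetry of `P` makes one step of `P` preserve distributions that are constant on classes,
and total variation distance between two such distributions equals that between their
pushforwards, since on each class `C` the summand `|μ z - ν z|` is constant and `|C|` copies of it
add up to `|μ̄ C - ν̄ C|`. Both `classUniform s x` and `uniformDist Ω` are constant on classes.
-/

section Lumping

variable (s : Setoid Ω)

def ConstOnClasses (μ : Ω → ℝ) : Prop :=
  ∀ y y', Quotient.mk s y = Quotient.mk s y' → μ y = μ y'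

variable {s}

lemma ConstOnClasses.apply_eq_out {μ : Ω → ℝ} (hμ : ConstOnClasses s μ) {C : Quotient s} {z : Ω}
    (hz : Quotient.mk s z = C) : μ z = μ C.out :=
  hμ _ _ (by rw [hz, Quotient.out_eq])

variable [Fintype Ω]

lemma constOnClasses_uniformDist : ConstOnClasses s (uniformDist Ω) :=
  fun _ _ _ => rfl

variable [DecidableEq (Quotient s)]

lemma ConstOnClasses.pushforward_eq {μ : Ω → ℝ} (hμ : ConstOnClasses s μ) (C : Quotient s) :
    Pushforward s μ C = #{z | Quotient.mk s z = C} * μ C.out := by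
  rw [Pushforward, Finset.sum_congr rfl fun z hz => hμ.apply_eq_out (Finset.mem_filter.mp hz).2,
    Finset.sum_const, nsmul_eq_mul]

lemma constOnClasses_classUniform (x : Ω) : ConstOnClasses s (classUniform s x) := by
  intro y y' h
  simp only [classUniform, h]

lemma pushforward_classUniform (x : Ω) :
    Pushforward s (classUniform s x) = onePoint (Quotient.mk s x) := by
  funext C
  rw [(constOnClasses_classUniform x).pushforward_eq, onePoint, classUniform]
  by_cases hC : C = Quotient.mk s x
  · subst hC
    have hcard : (0 : ℝ) < classCard s x :=
      Nat.cast_pos.mpr (Finset.card_pos.mpr ⟨x, by simp⟩)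
    simp only [Quotient.out_eq, if_true]
    exact mul_one_div_cancel hcard.ne'
  · have hout : Quotient.mk s C.out ≠ Quotient.mk s x := by rwa [Quotient.out_eq]
    simp only [hout, hC, if_false, mul_zero]

lemma sum_eq_sum_pushforward [Fintype (Quotient s)] (μ : Ω → ℝ) :
    ∑ z, μ z = ∑ C : Quotient s, Pushforward s μ C :=
  (Finset.sum_fiberwise _ _ _).symm

lemma dV_pushforward [Fintype (Quotient s)] {μ ν : Ω → ℝ} (hμ : ConstOnClasses s μ)
    (hν : ConstOnClasses s ν) :
    dV (Pushforward s μ) (Pushforward s ν) = dV μ ν := by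
  have hdiff : ConstOnClasses s fun z => |μ z - ν z| := fun y y' h => by
    simp only [hμ y y' h, hν y y' h]
  rw [dV, dV, sum_eq_sum_pushforward (s := s)]
  congr 1
  refine Finset.sum_congr rfl fun C _ => ?_
  rw [hμ.pushforward_eq, hν.pushforward_eq, hdiff.pushforward_eq, ← mul_sub, abs_mul,
    Nat.abs_cast]

variable {P : Ω → Ω → ℝ}

lemma IsLumpable.pushforward_eq_proj (hlump : IsLumpable s P) (x : Ω) (C : Quotient s) :
    Pushforward s (P x) C = Proj s P (Quotient.mk s x) C :=
  hlump x _ (Quotient.exact (Quotient.out_eq _).symm) C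

lemma IsLumpable.semiconj_pushforward_step [Fintype (Quotient s)] (hlump : IsLumpable s P) :
    Function.Semiconj (Pushforward s) (Step P) (Step (Proj s P)) := by
  intro μ
  funext C
  calc Pushforward s (Step P μ) C
      = ∑ x, μ x * Proj s P (Quotient.mk s x) C := by
        simp only [Pushforward, Step, ← hlump.pushforward_eq_proj, Finset.mul_sum]
        exact Finset.sum_comm
    _ = Step (Proj s P) (Pushforward s μ) C := by
        rw [sum_eq_sum_pushforward (s := s), Step]
        refine Finset.sum_congr rfl fun D _ => ?_
        rw [Pushforward, Pushforward, Finset.sum_mul]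
        exact Finset.sum_congr rfl fun z hz => by rw [(Finset.mem_filter.mp hz).2]

lemma ConstOnClasses.step [Fintype (Quotient s)] (hsym : ∀ x y, P x y = P y x)
    (hlump : IsLumpable s P) {μ : Ω → ℝ} (hμ : ConstOnClasses s μ) :
    ConstOnClasses s (Step P μ) := by
  -- By symmetry, `Step P μ y` only sees `y` through the lumpable row `P y`.
  have hrow : ∀ y, Step P μ y = ∑ D : Quotient s, μ D.out * Pushforward s (P y) D := by
    intro y
    rw [Step, sum_eq_sum_pushforward (s := s)]
    refine Finset.sum_congr rfl fun D _ => ?_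
    rw [Pushforward, Pushforward, Finset.mul_sum]
    exact Finset.sum_congr rfl fun z hz => by
      rw [hμ.apply_eq_out (Finset.mem_filter.mp hz).2, hsym]
  intro y y' h
  simp only [hrow, hlump y y' (Quotient.exact h)]

lemma ConstOnClasses.iterate_step [Fintype (Quotient s)] (hsym : ∀ x y, P x y = P y x)
    (hlump : IsLumpable s P) {μ : Ω → ℝ} (hμ : ConstOnClasses s μ) (t : ℕ) :
    ConstOnClasses s ((Step P)^[t] μ) := by
  induction t with
  | zero => exact hμ
  | succ t ih => simpa only [Function.iterate_succ_apply'] using ih.step hsym hlump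

end Lumping

theorem dV_classUniform_eq_proj_general
    [Fintype Ω] (s : Setoid Ω) [DecidableEq (Quotient s)]
    [Fintype (Quotient s)]
    (P : Ω → Ω → ℝ)
    (hsym : ∀ x y, P x y = P y x)
    (hlump : IsLumpable s P) :
    ∀ (x : Ω) (t : ℕ),
      dV ((Step P)^[t] (classUniform s x)) (uniformDist Ω) =
        dV ((Step (Proj s P))^[t] (onePoint (Quotient.mk s x)))
          (Pushforward s (uniformDist Ω)) := by
  intro x t
  rw [← pushforward_classUniform, ← (hlump.semiconj_pushforward_step.iterate_right t).eq,
    dV_pushforward ((constOnClasses_classUniform x).iterate_step hsym hlump t)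
      constOnClasses_uniformDist]

/-- for a symmetric lumpable transition matrix, the distance to
stationarity of the chain started from the uniform distribution on the class of `x`
equals the distance to stationarity of the projected chain started at the class of
`x`. -/
theorem dV_classUniform_eq_proj
    [Fintype Ω] [Nonempty Ω] (s : Setoid Ω) [DecidableEq (Quotient s)]
    [Fintype (Quotient s)]
    (P : Ω → Ω → ℝ)
    (hP0 : ∀ x y, 0 ≤ P x y) (hP1 : ∀ x, ∑ y, P x y = 1)
    (hsym : ∀ x y, P x y = P y x)
    (hlump : IsLumpable s P) :
    ∀ (x : Ω) (t : ℕ),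
      dV ((Step P)^[t] (classUniform s x)) (uniformDist Ω) =
        dV ((Step (Proj s P))^[t] (onePoint (Quotient.mk s x)))
          (Pushforward s (uniformDist Ω)) :=
  dV_classUniform_eq_proj_general s P hsym hlump
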